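/- Let g(t) = e^{−t}·1_{(0,∞)}(t) for t ∈ ℝ, let a > 2, b > 0, and let γ(x,ξ) = exp(−a|x| − b|ξ|). Then (g,γ) is an admissible pair: there exists a locally bounded μ : ℝ² → (0,∞), namely μ(τ₁,τ₂) = e^{|τ₁|}(1 + π|τ₂|), such that |V_g g(z+τ)| ≤ μ(τ)·|V_g g(z)| for all z, τ ∈ ℝ², and ∫_{ℝ²} μ(τ)² (γ ∗ Rγ)(τ) dτ < ∞. -/

import Mathlib

open MeasureTheory Set Real

/-- The short-time Fourier transform `V_g f (x,ξ) = ∫ f(t) conj(g(t−x)) e^{−2πiξt} dt`,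
viewed as a function on `ℝ² = EuclideanSpace ℝ (Fin 2)`. -/
noncomputable def STFT (g f : ℝ → ℂ) (z : EuclideanSpace ℝ (Fin 2)) : ℂ :=
  ∫ t : ℝ, f t * (starRingEnd ℂ) (g (t - z 0)) *
    Complex.exp (((-2 * Real.pi * z 1 * t : ℝ) : ℂ) * Complex.I)

/-- The one-sided exponential window `g(t) = e^{−t} 1_{(0,∞)}(t)`. -/
noncomputable def oneSidedExp (t : ℝ) : ℂ :=
  Set.indicator (Set.Ioi (0 : ℝ)) (fun s => (Real.exp (-s) : ℂ)) t

lemma aux_integrableOn_cexp (c : ℂ) (hc : 0 < c.re) (m : ℝ) :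
    IntegrableOn (fun t : ℝ => Complex.exp (-(c * t))) (Ioi m) := by
  refine Integrable.mono' ((exp_neg_integrableOn_Ioi m hc).const_mul (Real.exp 0)) ?_ ?_
  · exact (Complex.continuous_exp.comp (by continuity)).aestronglyMeasurable.restrict
  · filter_upwards with t
    rw [Complex.norm_exp]
    simp only [Complex.neg_re, Complex.mul_re, Complex.ofReal_re, Complex.ofReal_im]
    rw [Real.exp_zero, one_mul]
    apply le_of_eq; ring_nf

lemma aux_integral_cexp_Ioi (c : ℂ) (hc : 0 < c.re) (m : ℝ) :
    ∫ t in Ioi m, Complex.exp (-(c * t)) = Complex.exp (-(c * m)) / c := by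
  have hc0 : c ≠ 0 := fun h => by simp [h] at hc
  have hderiv : ∀ t ∈ Ici m, HasDerivAt (fun t : ℝ => -Complex.exp (-(c * t)) / c)
      (Complex.exp (-(c * t))) t := by
    intro t _
    have h1 : HasDerivAt (fun t : ℝ => (t : ℂ)) 1 t := Complex.ofRealCLM.hasDerivAt
    have h2 : HasDerivAt (fun t : ℝ => -(c * (t : ℂ))) (-c) t := by
      have h := (h1.const_mul c).neg; rw [mul_one] at h; exact h
    have h3 := h2.cexp
    have := (h3.neg).div_const c
    simpa [mul_comm, mul_div_assoc, neg_div, mul_div_cancel_left₀ _ hc0] using this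
  have htend : Filter.Tendsto (fun t : ℝ => -Complex.exp (-(c * t)) / c) Filter.atTop (nhds 0) := by
    rw [show (0:ℂ) = -0/c by simp]
    apply Filter.Tendsto.div_const
    apply Filter.Tendsto.neg
    rw [tendsto_zero_iff_norm_tendsto_zero]
    have : ∀ t : ℝ, ‖Complex.exp (-(c * t))‖ = Real.exp (-(c.re * t)) := by
      intro t
      rw [Complex.norm_exp]
      congr 1
      simp [Complex.mul_re]
    simp only [this]
    exact Real.tendsto_exp_atBot.comp
      (Filter.tendsto_neg_atTop_atBot.comp (Filter.Tendsto.const_mul_atTop hc Filter.tendsto_id))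
  rw [integral_Ioi_of_hasDerivAt_of_tendsto' hderiv (aux_integrableOn_cexp c hc m) htend]
  simp [neg_div]

lemma aux_STFT_norm (z : EuclideanSpace ℝ (Fin 2)) :
    ‖STFT oneSidedExp oneSidedExp z‖ =
      Real.exp (-|z 0|) / (2 * Real.sqrt (1 + Real.pi ^ 2 * (z 1) ^ 2)) := by
  set x := z 0
  set ξ := z 1
  set c : ℂ := 2 + (2 * Real.pi * ξ : ℝ) * Complex.I with hc_def
  have hcre : c.re = 2 := by simp [hc_def]
  have hcim : c.im = 2 * Real.pi * ξ := by simp [hc_def]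
  set m := max 0 x with hm
  have hintegrand : ∀ t : ℝ,
      oneSidedExp t * (starRingEnd ℂ) (oneSidedExp (t - x)) *
        Complex.exp (((-2 * Real.pi * ξ * t : ℝ) : ℂ) * Complex.I) =
      Set.indicator (Ioi m) (fun t : ℝ => Complex.exp (x : ℂ) * Complex.exp (-(c * t))) t := by
    intro t
    by_cases ht : t ∈ Ioi m
    · have h1 : (0:ℝ) < t := lt_of_le_of_lt (le_max_left _ _) ht
      have h2 : x < t := lt_of_le_of_lt (le_max_right _ _) ht
      rw [Set.indicator_of_mem ht, oneSidedExp, oneSidedExp,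
        Set.indicator_of_mem (by exact h1), Set.indicator_of_mem (by simpa using h2)]
      rw [Complex.conj_ofReal, Complex.ofReal_exp, Complex.ofReal_exp,
        ← Complex.exp_add, ← Complex.exp_add, ← Complex.exp_add]
      congr 1
      rw [hc_def]
      push_cast
      ring
    · rw [Set.indicator_of_notMem ht]
      rw [mem_Ioi, not_lt, hm, le_max_iff] at ht
      rcases ht with h1 | h1
      · rw [oneSidedExp, Set.indicator_of_notMem (by simpa using h1)]
        simp
      · have : t - x ≤ 0 := by linarith
        rw [show oneSidedExp (t - x) = 0 from
          Set.indicator_of_notMem (by simpa using this) _]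
        simp
  have : STFT oneSidedExp oneSidedExp z =
      Complex.exp (x : ℂ) * (Complex.exp (-(c * m)) / c) := by
    rw [STFT]
    change ∫ t : ℝ, oneSidedExp t * (starRingEnd ℂ) (oneSidedExp (t - x)) *
      Complex.exp (((-2 * Real.pi * ξ * t : ℝ) : ℂ) * Complex.I) = _
    simp only [hintegrand]
    rw [integral_indicator measurableSet_Ioi, integral_const_mul,
      aux_integral_cexp_Ioi c (by rw [hcre]; norm_num) m]
  rw [this]
  rw [norm_mul, norm_div,
    Complex.norm_exp, Complex.norm_exp]
  have h1 : ((x : ℂ)).re = x := by simp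
  have h2 : (-(c * (m:ℂ))).re = -(2 * m) := by
    simp [Complex.mul_re, hcre, hcim]
  rw [h1, h2]
  have h3 : ‖c‖ = 2 * Real.sqrt (1 + Real.pi ^ 2 * ξ ^ 2) := by
    rw [Complex.norm_def, Complex.normSq_apply, hcre, hcim]
    rw [show (2:ℝ) * 2 + 2 * Real.pi * ξ * (2 * Real.pi * ξ) = 4 * (1 + Real.pi ^2 * ξ^2) by ring]
    rw [Real.sqrt_mul (by norm_num : (0:ℝ) ≤ 4),
      show Real.sqrt 4 = 2 by
        rw [show (4:ℝ) = 2 ^ 2 by norm_num, Real.sqrt_sq]; norm_num]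
  rw [h3, ← mul_div_assoc, ← Real.exp_add]
  congr 2
  rcases le_or_gt x 0 with h | h
  · rw [hm, max_eq_left h, abs_of_nonpos h]; ring
  · rw [hm, max_eq_right h.le, abs_of_pos h]; ring

lemma aux_sqrt_ineq (ξ v : ℝ) :
    Real.sqrt (1 + Real.pi ^ 2 * ξ ^ 2) ≤
      (1 + Real.pi * |v|) * Real.sqrt (1 + Real.pi ^ 2 * (ξ + v) ^ 2) := by
  have hπ := Real.pi_pos
  have h1 : (1 + Real.pi * |v|) * Real.sqrt (1 + Real.pi ^ 2 * (ξ + v) ^ 2) =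
      Real.sqrt ((1 + Real.pi * |v|) ^ 2 * (1 + Real.pi ^ 2 * (ξ + v) ^ 2)) := by
    rw [Real.sqrt_mul (sq_nonneg _), Real.sqrt_sq (by positivity)]
  rw [h1]
  apply Real.sqrt_le_sqrt
  set s := ξ + v with hs
  have hξ : ξ = s - v := by rw [hs]; ring
  rw [hξ]
  have h2 : -(|s| * |v|) ≤ s * v := by
    rw [← abs_mul]; exact neg_abs_le _
  have h3 : Real.pi ^ 2 * -(|s| * |v|) ≤ Real.pi ^ 2 * (s * v) :=
    mul_le_mul_of_nonneg_left h2 (sq_nonneg _)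
  have h4 : 0 ≤ 2 * Real.pi * |v| * (1 - Real.pi * |s|) ^ 2 := by positivity
  have h5 : 0 ≤ Real.pi ^ 2 * |v| * |s| := by positivity
  have h6 : 0 ≤ Real.pi ^ 4 * |v| ^ 2 * s ^ 2 := by positivity
  have h3' : 0 ≤ Real.pi ^ 2 * (s * v + |s| * |v|) := by nlinarith [h2, sq_nonneg Real.pi]
  have hw : |s| ^ 2 = s ^ 2 := sq_abs s
  have ht : |v| ^ 2 = v ^ 2 := sq_abs v
  have cert : (1 + Real.pi * |v|) ^ 2 * (1 + Real.pi ^ 2 * s ^ 2) -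
      (1 + Real.pi ^ 2 * (s - v) ^ 2) =
      2 * Real.pi * |v| * (1 - Real.pi * |s|) ^ 2 +
      2 * Real.pi ^ 2 * (s * v + |s| * |v|) + Real.pi ^ 4 * |v| ^ 2 * s ^ 2 +
      2 * Real.pi ^ 2 * |v| * |s| := by
    linear_combination (-2 * Real.pi ^ 3 * |v|) * hw + Real.pi ^ 2 * ht
  linarith [cert, h3', h4, h5, h6]

lemma aux_real_ineq (x ξ u v : ℝ) :
    Real.exp (-|x + u|) / (2 * Real.sqrt (1 + Real.pi ^ 2 * (ξ + v) ^ 2)) ≤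
      Real.exp |u| * (1 + Real.pi * |v|) *
        (Real.exp (-|x|) / (2 * Real.sqrt (1 + Real.pi ^ 2 * ξ ^ 2))) := by
  have hπ := Real.pi_pos
  have hA : (0:ℝ) < Real.sqrt (1 + Real.pi ^ 2 * (ξ + v) ^ 2) := Real.sqrt_pos.mpr (by positivity)
  have hB : (0:ℝ) < Real.sqrt (1 + Real.pi ^ 2 * ξ ^ 2) := Real.sqrt_pos.mpr (by positivity)
  have hμ : (0:ℝ) < 1 + Real.pi * |v| := by positivity
  have key : Real.exp |u| * (1 + Real.pi * |v|) *
      (Real.exp (-|x|) / (2 * Real.sqrt (1 + Real.pi ^ 2 * ξ ^ 2))) =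
      (Real.exp |u| * Real.exp (-|x|)) /
        (2 * Real.sqrt (1 + Real.pi ^ 2 * ξ ^ 2) / (1 + Real.pi * |v|)) := by
    field_simp
  rw [key]
  apply div_le_div₀ (by positivity)
  · rw [← Real.exp_add]
    apply Real.exp_le_exp.mpr
    have h := abs_add_le (x + u) (-u)
    rw [abs_neg, show x + u + -u = x by ring] at h
    linarith
  · positivity
  · rw [div_le_iff₀ hμ]
    have := aux_sqrt_ineq ξ v
    nlinarith [this, hA, hμ]

lemma aux_integrable_exp_neg_abs {c : ℝ} (hc : 0 < c) :
    Integrable (fun x : ℝ => Real.exp (-(c * |x|))) := by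
  have h1 : IntegrableOn (fun x : ℝ => Real.exp (-(c * |x|))) (Ioi 0) := by
    refine ((exp_neg_integrableOn_Ioi 0 hc).congr_fun ?_ measurableSet_Ioi)
    intro x hx
    simp only []
    rw [abs_of_pos hx]; ring_nf
  have h2 : IntegrableOn (fun x : ℝ => Real.exp (-(c * |x|))) (Iic 0) := by
    rw [← (Measure.measurePreserving_neg (volume : Measure ℝ)).integrableOn_comp_preimage
      (Homeomorph.neg ℝ).measurableEmbedding]
    have hset : (fun x : ℝ => -x) ⁻¹' (Iic 0) = Ici 0 := by
      ext x; simp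
    rw [hset]
    have : ((fun x : ℝ => Real.exp (-(c * |x|))) ∘ fun x : ℝ => -x) =
        fun x : ℝ => Real.exp (-(c * |x|)) := by
      funext x; simp
    rw [this]
    have hu : (Ici (0:ℝ)) ⊆ Ioi 0 ∪ {0} := by
      intro x hx
      rcases eq_or_lt_of_le (mem_Ici.mp hx) with h | h
      · exact Or.inr (by simp [← h])
      · exact Or.inl h
    exact (h1.union ((integrableOn_singleton_iff).mpr (Or.inr (by simp)))).mono_set hu
  have := h2.union h1
  rwa [Iic_union_Ioi, integrableOn_univ] at this

noncomputable def auxEquiv : (ℝ × ℝ) ≃ᵐ EuclideanSpace ℝ (Fin 2) :=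
  (MeasurableEquiv.finTwoArrow).symm.trans (MeasurableEquiv.toLp 2 (Fin 2 → ℝ))

lemma auxEquiv_mp : MeasurePreserving auxEquiv :=
  ((EuclideanSpace.volume_preserving_symm_measurableEquiv_toLp (Fin 2)).symm).comp
    ((volume_preserving_finTwoArrow ℝ).symm)

lemma auxEquiv_apply0 (p : ℝ × ℝ) : (auxEquiv p) 0 = p.1 := rfl
lemma auxEquiv_apply1 (p : ℝ × ℝ) : (auxEquiv p) 1 = p.2 := rfl

lemma aux_int_E {f g : ℝ → ℝ} (hf : Integrable f) (hg : Integrable g) :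
    Integrable (fun y : EuclideanSpace ℝ (Fin 2) => f (y 0) * g (y 1)) := by
  rw [← MeasurePreserving.integrable_comp_emb auxEquiv_mp auxEquiv.measurableEmbedding]
  have : ((fun y : EuclideanSpace ℝ (Fin 2) => f (y 0) * g (y 1)) ∘ auxEquiv) =
      fun p : ℝ × ℝ => f p.1 * g p.2 := by
    funext p; simp [Function.comp, auxEquiv_apply0, auxEquiv_apply1]
  rw [this]
  exact hf.mul_prod hg

lemma aux_lin (c α β T Y : ℝ) (h0 : 0 ≤ β) (h1 : β ≤ 2 * c) (h2 : α + β = c) :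
    α * |T| + β * |Y| ≤ c * |T - Y| + c * |Y| := by
  have hA : |T| - |Y| ≤ |T - Y| := abs_sub_abs_le_abs_sub T Y
  have hB : |Y| - |T| ≤ |T - Y| := by
    rw [abs_sub_comm]; exact abs_sub_abs_le_abs_sub Y T
  have p1 : 0 ≤ ((2 * c - β) / 2) * (|T - Y| + |Y| - |T|) :=
    mul_nonneg (by linarith) (by linarith)
  have p2 : 0 ≤ (β / 2) * (|T - Y| + |T| - |Y|) :=
    mul_nonneg (by linarith) (by linarith)
  have h3 : α * |T| + β * |T| = c * |T| := by rw [← add_mul, h2]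
  nlinarith [p1, p2, h3]

lemma aux_part2 (a b : ℝ) (ha : 2 < a) (hb : 0 < b) :
    Integrable (fun τ : EuclideanSpace ℝ (Fin 2) =>
      (Real.exp |τ 0| * (1 + Real.pi * |τ 1|)) ^ 2 *
        ∫ y : EuclideanSpace ℝ (Fin 2),
          Real.exp (-a * |τ 0 - y 0| - b * |τ 1 - y 1|) *
            Real.exp (-a * |(-y) 0| - b * |(-y) 1|)) := by
  have hπ := Real.pi_pos
  have ha0 : (0:ℝ) < a := by linarith
  set E := EuclideanSpace ℝ (Fin 2)
  have hneg0 : ∀ y : E, (-y) 0 = -(y 0) := fun _ => rfl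
  have hneg1 : ∀ y : E, (-y) 1 = -(y 1) := fun _ => rfl
  set K : E → E → ℝ := fun τ y =>
    Real.exp (-a * |τ 0 - y 0| - b * |τ 1 - y 1|) *
      Real.exp (-a * |(-y) 0| - b * |(-y) 1|) with hK
  set I : E → ℝ := fun τ => ∫ y : E, K τ y with hI
  have hKnonneg : ∀ τ y, 0 ≤ K τ y := fun τ y =>
    mul_nonneg (Real.exp_nonneg _) (Real.exp_nonneg _)
  -- pointwise bound on K
  have hKle : ∀ τ y, K τ y ≤
      Real.exp (-((a + 2) / 2 * |τ 0| + b / 2 * |τ 1|)) *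
        (Real.exp (-((a - 2) / 2 * |y 0|)) * Real.exp (-(b / 2 * |y 1|))) := by
    intro τ y
    rw [hK]
    simp only [hneg0, hneg1, abs_neg]
    rw [← Real.exp_add, ← Real.exp_add, ← Real.exp_add]
    apply Real.exp_le_exp.mpr
    have l1 : (a + 2) / 2 * |τ 0| + (a - 2) / 2 * |y 0| ≤
        a * |τ 0 - y 0| + a * |y 0| :=
      aux_lin a ((a + 2) / 2) ((a - 2) / 2) _ _ (by linarith) (by linarith) (by ring)
    have l2 : b / 2 * |τ 1| + b / 2 * |y 1| ≤ b * |τ 1 - y 1| + b * |y 1| :=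
      aux_lin b (b / 2) (b / 2) _ _ (by linarith) (by linarith) (by ring)
    linarith
  -- integrability of the y-majorant
  have hmaj : Integrable (fun y : E =>
      Real.exp (-((a - 2) / 2 * |y 0|)) * Real.exp (-(b / 2 * |y 1|))) :=
    aux_int_E (aux_integrable_exp_neg_abs (by linarith)) (aux_integrable_exp_neg_abs (by linarith))
  set C : ℝ := ∫ y : E, Real.exp (-((a - 2) / 2 * |y 0|)) * Real.exp (-(b / 2 * |y 1|)) with hC
  have hC0 : 0 ≤ C := integral_nonneg fun y =>
    mul_nonneg (Real.exp_nonneg _) (Real.exp_nonneg _)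
  have hInonneg : ∀ τ, 0 ≤ I τ := fun τ => integral_nonneg (hKnonneg τ)
  have hIle : ∀ τ, I τ ≤ Real.exp (-((a + 2) / 2 * |τ 0| + b / 2 * |τ 1|)) * C := by
    intro τ
    rw [hI, hC, ← integral_const_mul]
    exact integral_mono_of_nonneg (Filter.Eventually.of_forall (hKnonneg τ))
      (hmaj.const_mul _) (Filter.Eventually.of_forall (hKle τ))
  -- the majorant for the full function
  set G : E → ℝ := fun τ =>
    (Real.exp |τ 0| * (1 + Real.pi * |τ 1|)) ^ 2 *
      (Real.exp (-((a + 2) / 2 * |τ 0| + b / 2 * |τ 1|)) * C) with hG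
  have hGint : Integrable G := by
    have h1 : Integrable (fun x : ℝ => Real.exp |x| ^ 2 *
        Real.exp (-((a + 2) / 2 * |x|)) * C) := by
      have heq : (fun x : ℝ => Real.exp |x| ^ 2 * Real.exp (-((a + 2) / 2 * |x|)) * C) =
          fun x : ℝ => Real.exp (-((a - 2) / 2 * |x|)) * C := by
        funext x
        rw [sq, ← Real.exp_add, ← Real.exp_add]
        congr 2
        ring
      rw [heq]
      exact (aux_integrable_exp_neg_abs (by linarith)).mul_const C
    have h2 : Integrable (fun y : ℝ => (1 + Real.pi * |y|) ^ 2 *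
        Real.exp (-(b / 2 * |y|))) := by
      refine Integrable.mono' (((aux_integrable_exp_neg_abs
        (show (0:ℝ) < b/4 by linarith)).const_mul ((1 + 8 * Real.pi / b) ^ 2))) ?_ ?_
      · apply Continuous.aestronglyMeasurable
        fun_prop
      · filter_upwards with y
        rw [Real.norm_eq_abs, abs_of_nonneg (by positivity)]
        have key : 1 + Real.pi * |y| ≤ (1 + 8 * Real.pi / b) * Real.exp (b / 8 * |y|) := by
          have h4 : b / 8 * |y| ≤ Real.exp (b / 8 * |y|) := by
            linarith [Real.add_one_le_exp (b / 8 * |y|)]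
          have h5 : (1:ℝ) ≤ Real.exp (b / 8 * |y|) :=
            Real.one_le_exp (by positivity)
          have h6 : |y| ≤ 8 / b * Real.exp (b / 8 * |y|) := by
            rw [div_mul_eq_mul_div, le_div_iff₀ hb]
            nlinarith
          have h7 : Real.pi * |y| ≤ Real.pi * (8 / b * Real.exp (b / 8 * |y|)) :=
            mul_le_mul_of_nonneg_left h6 hπ.le
          have h8 : Real.pi * (8 / b * Real.exp (b / 8 * |y|)) =
              8 * Real.pi / b * Real.exp (b / 8 * |y|) := by ring
          linarith [h5, h7, h8.le, h8.ge]
        have key2 : (1 + Real.pi * |y|) ^ 2 ≤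
            (1 + 8 * Real.pi / b) ^ 2 * Real.exp (b / 4 * |y|) := by
          have e1 : Real.exp (b / 8 * |y|) * Real.exp (b / 8 * |y|) = Real.exp (b / 4 * |y|) := by
            rw [← Real.exp_add]; congr 1; ring
          have h7 : (0:ℝ) ≤ 1 + Real.pi * |y| := by positivity
          calc (1 + Real.pi * |y|) ^ 2
              ≤ ((1 + 8 * Real.pi / b) * Real.exp (b / 8 * |y|)) ^ 2 := by
                apply pow_le_pow_left₀ h7 key
            _ = (1 + 8 * Real.pi / b) ^ 2 * Real.exp (b / 4 * |y|) := by
                rw [mul_pow, sq, sq, e1]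
        calc (1 + Real.pi * |y|) ^ 2 * Real.exp (-(b / 2 * |y|))
            ≤ (1 + 8 * Real.pi / b) ^ 2 * Real.exp (b / 4 * |y|) * Real.exp (-(b / 2 * |y|)) := by
              apply mul_le_mul_of_nonneg_right key2 (Real.exp_nonneg _)
          _ = (1 + 8 * Real.pi / b) ^ 2 * Real.exp (-(b / 4 * |y|)) := by
              rw [mul_assoc, ← Real.exp_add]
              congr 2
              ring
    have heqG : G = fun τ : E =>
        (fun x => Real.exp |x| ^ 2 * Real.exp (-((a + 2) / 2 * |x|)) * C) (τ 0) *
          (fun y => (1 + Real.pi * |y|) ^ 2 * Real.exp (-(b / 2 * |y|))) (τ 1) := by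
      funext τ
      rw [hG]
      simp only []
      rw [show Real.exp (-((a + 2) / 2 * |τ 0| + b / 2 * |τ 1|)) =
        Real.exp (-((a + 2) / 2 * |τ 0|)) * Real.exp (-(b / 2 * |τ 1|)) by
          rw [← Real.exp_add]; congr 1; ring]
      ring
    rw [heqG]
    exact aux_int_E h1 h2
  -- measurability of the full function
  have hmeas : AEStronglyMeasurable (fun τ : E =>
      (Real.exp |τ 0| * (1 + Real.pi * |τ 1|)) ^ 2 * I τ) := by
    apply AEStronglyMeasurable.mul
    · apply Continuous.aestronglyMeasurable
      unfold E
      fun_prop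
    · apply StronglyMeasurable.aestronglyMeasurable
      apply MeasureTheory.StronglyMeasurable.integral_prod_right'
        (f := fun p : E × E => K p.1 p.2)
      apply Continuous.stronglyMeasurable
      rw [hK]
      simp only [hneg0, hneg1]
      unfold E
      fun_prop
  refine Integrable.mono' hGint hmeas ?_
  filter_upwards with τ
  rw [Real.norm_eq_abs, abs_of_nonneg (mul_nonneg (sq_nonneg _) (hInonneg τ))]
  rw [hG]
  exact mul_le_mul_of_nonneg_left (hIle τ) (sq_nonneg _)

/-- For `g` the one-sided exponential, `a > 2`, `b > 0` and
`γ(x,ξ) = exp(−a|x| − b|ξ|)`, the pair `(g, γ)` is admissible with the concrete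
controlling function `μ(τ₁,τ₂) = e^{|τ₁|}(1 + π|τ₂|)`:
`|V_g g(z+τ)| ≤ μ(τ)|V_g g(z)|` for all `z, τ`, and `∫ μ(τ)² (γ ∗ Rγ)(τ) dτ < ∞`. -/
theorem admissible_pair_oneSidedExp (a b : ℝ) (ha : 2 < a) (hb : 0 < b) :
    (∀ z τ : EuclideanSpace ℝ (Fin 2),
      ‖STFT oneSidedExp oneSidedExp (z + τ)‖ ≤
        Real.exp |τ 0| * (1 + Real.pi * |τ 1|) * ‖STFT oneSidedExp oneSidedExp z‖) ∧
    Integrable (fun τ : EuclideanSpace ℝ (Fin 2) =>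
      (Real.exp |τ 0| * (1 + Real.pi * |τ 1|)) ^ 2 *
        ∫ y : EuclideanSpace ℝ (Fin 2),
          Real.exp (-a * |τ 0 - y 0| - b * |τ 1 - y 1|) *
            Real.exp (-a * |(-y) 0| - b * |(-y) 1|)) := by
  constructor
  · intro z τ
    rw [aux_STFT_norm, aux_STFT_norm]
    have h0 : (z + τ) 0 = z 0 + τ 0 := rfl
    have h1 : (z + τ) 1 = z 1 + τ 1 := rfl
    rw [h0, h1]
    exact aux_real_ineq (z 0) (z 1) (τ 0) (τ 1)
  · exact aux_part2 a b ha hb
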